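/- Let Δ_1, …, Δ_r and ∇_1, …, ∇_r be dual to each other centered nef-partitions in ℝ^d, with Δ = Δ_1 + ⋯ + Δ_r, ∇ = ∇_1 + ⋯ + ∇_r, and Δ* = {y ∈ ℝ^d : ⟨x,y⟩ ≥ −1 for all x ∈ Δ}. Then for every i = 1, …, r: (a) ∇_i ∩ ∂Δ* = {v ∈ Δ* : min_{u ∈ Δ_i} ⟨u,v⟩ = −1}; (b) every face F of ∇_i with 0 ∉ F is a face of Δ* and is contained in a face of ∇. -/
import Mathlib


open Pointwise

noncomputable section

/-- A point of `ℝ^n` all of whose coordinates are integers (a lattice point of `ℤ^n`). -/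
def IsLatticePt {n : ℕ} (x : Fin n → ℝ) : Prop := ∀ k, ∃ m : ℤ, x k = (m : ℝ)

/-- A lattice polytope: the convex hull of finitely many lattice points. -/
def IsLatticePoly {n : ℕ} (P : Set (Fin n → ℝ)) : Prop :=
  ∃ V : Finset (Fin n → ℝ), V.Nonempty ∧ (∀ v ∈ V, IsLatticePt v) ∧
    P = convexHull ℝ (V : Set (Fin n → ℝ))

/-- The standard inner product pairing on `ℝ^n`. -/
def pairR {n : ℕ} (x y : Fin n → ℝ) : ℝ := ∑ k, x k * y k

/-- The dual polytope `P* = {y : ⟨x,y⟩ ≥ -1 ∀ x ∈ P}`. -/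
def dualPoly {n : ℕ} (P : Set (Fin n → ℝ)) : Set (Fin n → ℝ) :=
  {y | ∀ x ∈ P, -1 ≤ pairR x y}

/-- A reflexive polytope: a lattice polytope with `0` in its interior whose dual
polytope is again a lattice polytope. -/
def IsReflexivePoly {n : ℕ} (P : Set (Fin n → ℝ)) : Prop :=
  IsLatticePoly P ∧ (0 : Fin n → ℝ) ∈ interior P ∧ IsLatticePoly (dualPoly P)

/-- The dimension of a polytope: the dimension of the direction of its affine span. -/
def polyDim {n : ℕ} (P : Set (Fin n → ℝ)) : ℕ :=
  Module.finrank ℝ (affineSpan ℝ P).direction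

/-- A (full-dimensional) Gorenstein polytope of index `r`: `rP` has `m` as its unique
interior lattice point and `rP - m` is reflexive. -/
def IsGorensteinPoly {n : ℕ} (P : Set (Fin n → ℝ)) (r : ℕ) (m : Fin n → ℝ) : Prop :=
  IsLatticePoly P ∧ IsLatticePt m ∧
  (∀ x, IsLatticePt x → (x ∈ interior ((r : ℝ) • P) ↔ x = m)) ∧
  IsReflexivePoly ((fun x => x - m) '' ((r : ℝ) • P))

/-- `y` is a point of the lattice dual to the (saturated) lattice `ℤ^n ∩ W` inside `W`. -/
def IsDualLatticePt {n : ℕ} (W : Submodule ℝ (Fin n → ℝ)) (y : Fin n → ℝ) : Prop :=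
  y ∈ W ∧ ∀ x ∈ W, IsLatticePt x → ∃ m : ℤ, pairR x y = (m : ℝ)

/-- Reflexivity of a (possibly lower-dimensional) lattice polytope inside its linear
span: `0` is in the relative interior and the dual polytope taken inside the linear
span is a lattice polytope with respect to the dual lattice. -/
def IsReflexiveIn {n : ℕ} (P : Set (Fin n → ℝ)) : Prop :=
  IsLatticePoly P ∧ (0 : Fin n → ℝ) ∈ intrinsicInterior ℝ P ∧
  ∃ V : Finset (Fin n → ℝ), V.Nonempty ∧
    (∀ v ∈ V, IsDualLatticePt (Submodule.span ℝ P) v) ∧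
    {y | y ∈ Submodule.span ℝ P ∧ ∀ x ∈ P, -1 ≤ pairR x y} =
      convexHull ℝ (V : Set (Fin n → ℝ))

/-- Gorenstein polytope of index `r` (possibly lower-dimensional): `rP` has `m` as its
unique relative-interior lattice point and `rP - m` is reflexive within its span. -/
def IsGorensteinIn {n : ℕ} (P : Set (Fin n → ℝ)) (r : ℕ) (m : Fin n → ℝ) : Prop :=
  IsLatticePoly P ∧ IsLatticePt m ∧
  (∀ x, IsLatticePt x → (x ∈ intrinsicInterior ℝ ((r : ℝ) • P) ↔ x = m)) ∧
  IsReflexiveIn ((fun x => x - m) '' ((r : ℝ) • P))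

/-- The Minkowski sum `Δ 0 + ⋯ + Δ (r-1)` of a family of sets. -/
def minkSum {n r : ℕ} (Δ : Fin r → Set (Fin n → ℝ)) : Set (Fin n → ℝ) :=
  {x | ∃ f : Fin r → (Fin n → ℝ), (∀ i, f i ∈ Δ i) ∧ x = ∑ i, f i}

/-- The Minkowski sum `Σ_{i ∈ I} Δ i`. -/
def minkSumOver {n r : ℕ} (I : Finset (Fin r)) (Δ : Fin r → Set (Fin n → ℝ)) :
    Set (Fin n → ℝ) :=
  {x | ∃ f : Fin r → (Fin n → ℝ), (∀ i ∈ I, f i ∈ Δ i) ∧ x = ∑ i ∈ I, f i}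

/-- The point `x × e_i ∈ ℝ^d × ℝ^r`. -/
def cayleyPt {d r : ℕ} (x : Fin d → ℝ) (i : Fin r) : Fin (d + r) → ℝ :=
  Fin.append x (fun j => if j = i then 1 else 0)

/-- The Cayley polytope `Δ 0 * ⋯ * Δ (r-1) ⊂ ℝ^d × ℝ^r`. -/
def cayley {d r : ℕ} (Δ : Fin r → Set (Fin d → ℝ)) : Set (Fin (d + r) → ℝ) :=
  convexHull ℝ (⋃ i, (fun x => cayleyPt x i) '' Δ i)

/-- `F` is a facet of `P`: a nonempty exposed face of dimension one less. -/
def IsFacetOf {n : ℕ} (F P : Set (Fin n → ℝ)) : Prop :=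
  IsExposed ℝ P F ∧ F.Nonempty ∧ polyDim F + 1 = polyDim P

/-- A special `(r-1)`-simplex of `P`: `r` affinely independent lattice points of `P`
such that every facet of `P` contains exactly `r - 1` of them. -/
def IsSpecialSimplex {n : ℕ} (P : Set (Fin n → ℝ)) (r : ℕ) (v : Fin r → Fin n → ℝ) : Prop :=
  (∀ i, IsLatticePt (v i) ∧ v i ∈ P) ∧ AffineIndependent ℝ v ∧
  ∀ F, IsFacetOf F P → ∃! i, v i ∉ F

/-- `∇_i = {y : ⟨x,y⟩ ≥ -δ_{ij} ∀ x ∈ Δ_j ∀ j}`, the polytopes of the dual nef-partition. -/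
def nefDual {d r : ℕ} (Δ : Fin r → Set (Fin d → ℝ)) (i : Fin r) : Set (Fin d → ℝ) :=
  {y | ∀ j, ∀ x ∈ Δ j, -(if i = j then (1 : ℝ) else 0) ≤ pairR x y}

/-- A centered nef-partition: lattice polytopes containing `0` whose Minkowski sum is a
reflexive polytope with `0` as its unique interior lattice point. -/
def IsCenteredNefPartition {d r : ℕ} (Δ : Fin r → Set (Fin d → ℝ)) : Prop :=
  (∀ i, IsLatticePoly (Δ i) ∧ (0 : Fin d → ℝ) ∈ Δ i) ∧
  IsReflexivePoly (minkSum Δ) ∧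
  ∀ x, IsLatticePt x → x ∈ interior (minkSum Δ) → x = 0

/-- Two centered nef-partitions dual to each other. -/
def AreDualNefPartitions {d r : ℕ} (Δ Nb : Fin r → Set (Fin d → ℝ)) : Prop :=
  IsCenteredNefPartition Δ ∧ IsCenteredNefPartition Nb ∧
  (∀ i, Nb i = nefDual Δ i) ∧ (∀ i, Δ i = nefDual Nb i)

/-- A Gorenstein cone with its distinguished lattice point `nσ`: a full-dimensional cone
generated by finitely many lattice points on the hyperplane `⟨·, nσ⟩ = 1`. -/
def IsGorensteinCone {n : ℕ} (σ : Set (Fin n → ℝ)) (nσ : Fin n → ℝ) : Prop :=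
  IsLatticePt nσ ∧ Submodule.span ℝ σ = ⊤ ∧
  ∃ V : Finset (Fin n → ℝ), V.Nonempty ∧
    (∀ v ∈ V, IsLatticePt v ∧ pairR v nσ = 1) ∧
    σ = {x | ∃ c : (Fin n → ℝ) → ℝ, (∀ v, 0 ≤ c v) ∧ x = ∑ v ∈ V, c v • v}

/-- The dual cone. -/
def dualCone {n : ℕ} (σ : Set (Fin n → ℝ)) : Set (Fin n → ℝ) :=
  {y | ∀ x ∈ σ, 0 ≤ pairR x y}

/-- Integrally closed lattice polytope: every lattice point of `k • P` is a sum of `k`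
lattice points of `P`. -/
def IntegrallyClosed {n : ℕ} (P : Set (Fin n → ℝ)) : Prop :=
  ∀ (k : ℕ) (x : Fin n → ℝ), IsLatticePt x → x ∈ (k : ℝ) • P →
    ∃ v : Fin k → (Fin n → ℝ), (∀ j, IsLatticePt (v j) ∧ v j ∈ P) ∧ x = ∑ j, v j

namespace NefAux

variable {d r : ℕ}

lemma pairR_comm (x y : Fin d → ℝ) : pairR x y = pairR y x :=
  Finset.sum_congr rfl fun k _ => mul_comm _ _

/-- pairing with fixed left argument, as a continuous linear map in the right argument -/
def pL (u : Fin d → ℝ) : (Fin d → ℝ) →L[ℝ] ℝ :=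
  LinearMap.toContinuousLinearMap
  { toFun := fun v => pairR u v
    map_add' := by
      intro a b; unfold pairR; simp [mul_add, Finset.sum_add_distrib]
    map_smul' := by
      intro c a; unfold pairR; simp [Finset.mul_sum, mul_left_comm] }

@[simp] lemma pL_apply (u v : Fin d → ℝ) : pL u v = pairR u v := rfl

lemma isLinearMap_pairR_left (y : Fin d → ℝ) : IsLinearMap ℝ (fun x => pairR x y) := by
  constructor
  · intro a b; unfold pairR; simp [add_mul, Finset.sum_add_distrib]
  · intro c a; unfold pairR; simp [Finset.mul_sum, mul_assoc]

lemma pairR_add_left (a b v : Fin d → ℝ) : pairR (a + b) v = pairR a v + pairR b v :=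
  (isLinearMap_pairR_left v).map_add a b

lemma pairR_smul_right (c : ℝ) (x v : Fin d → ℝ) : pairR x (c • v) = c * pairR x v :=
  (pL x).map_smul c v

lemma pairR_sub_right (x a b : Fin d → ℝ) : pairR x (a - b) = pairR x a - pairR x b :=
  (pL x).map_sub a b

lemma pairR_zero_left (v : Fin d → ℝ) : pairR (0 : Fin d → ℝ) v = 0 := by
  unfold pairR; simp

lemma pairR_sum_left {ι : Type*} (s : Finset ι) (f : ι → Fin d → ℝ) (v : Fin d → ℝ) :
    pairR (∑ i ∈ s, f i) v = ∑ i ∈ s, pairR (f i) v :=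
  map_sum ((isLinearMap_pairR_left v).mk' _) f s

lemma pairR_sum_right {ι : Type*} (s : Finset ι) (u : Fin d → ℝ) (f : ι → Fin d → ℝ) :
    pairR u (∑ i ∈ s, f i) = ∑ i ∈ s, pairR u (f i) :=
  map_sum (pL u) f s

/-- a linear bound on a finite set extends to the hull: left argument version -/
lemma hull_pair_ge {V : Finset (Fin d → ℝ)} {y : Fin d → ℝ} {c : ℝ}
    (h : ∀ w ∈ V, c ≤ pairR w y) :
    ∀ x ∈ convexHull ℝ (V : Set (Fin d → ℝ)), c ≤ pairR x y :=
  convexHull_min h (convex_halfSpace_ge (isLinearMap_pairR_left y) c)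

lemma hull_clm_le {V : Finset (Fin d → ℝ)} {L : (Fin d → ℝ) →L[ℝ] ℝ} {c : ℝ}
    (h : ∀ w ∈ V, L w ≤ c) :
    ∀ x ∈ convexHull ℝ (V : Set (Fin d → ℝ)), L x ≤ c :=
  convexHull_min h (convex_halfSpace_le ⟨L.map_add, L.map_smul⟩ c)

lemma hull_pair_eq {S : Finset (Fin d → ℝ)} {u : Fin d → ℝ} {c : ℝ}
    (h : ∀ w ∈ S, pairR u w = c) :
    ∀ x ∈ convexHull ℝ (S : Set (Fin d → ℝ)), pairR u x = c := by
  have h' : ∀ w ∈ S, pL u w = c := by intro w hw; rw [pL_apply]; exact h w hw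
  intro x hx
  rw [← pL_apply]
  exact convexHull_min h' (convex_hyperplane ⟨(pL u).map_add, (pL u).map_smul⟩ c) hx

/-- the argmax face of a hull: if a linear functional is `≤ b` on `T` and `= b` at
`x ∈ conv T`, then `x` is in the hull of the vertices where it equals `b`. -/
lemma mem_filter_hull {T : Finset (Fin d → ℝ)} (L : (Fin d → ℝ) →L[ℝ] ℝ) {b : ℝ}
    (hle : ∀ w ∈ T, L w ≤ b) {x : Fin d → ℝ}
    (hx : x ∈ convexHull ℝ (T : Set (Fin d → ℝ))) (hxb : L x = b) :
    x ∈ convexHull ℝ ((T.filter fun w => L w = b : Finset (Fin d → ℝ)) :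
      Set (Fin d → ℝ)) := by
  classical
  rw [Finset.convexHull_eq] at hx
  obtain ⟨w, hw0, hw1, hwx⟩ := hx
  have hx' : ∑ y ∈ T, w y • y = x := by
    rw [← hwx, Finset.centerMass, hw1]; simp
  have hLx : ∑ y ∈ T, w y * L y = b := by
    rw [← hxb, ← hx', map_sum]
    exact Finset.sum_congr rfl fun y _ => by simp
  have hwb : ∑ y ∈ T, w y * L y = ∑ y ∈ T, w y * b := by
    rw [hLx, ← Finset.sum_mul, hw1, one_mul]
  have hkey : ∀ y ∈ T, w y * L y = w y * b :=
    (Finset.sum_eq_sum_iff_of_le fun y hy =>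
      mul_le_mul_of_nonneg_left (hle y hy) (hw0 y hy)).1 hwb
  have hzero : ∀ y ∈ T, L y ≠ b → w y = 0 := by
    intro y hy hne
    by_contra hwy
    exact hne (mul_left_cancel₀ hwy (hkey y hy))
  set T' := T.filter fun w => L w = b with hT'
  have hsum1 : ∑ y ∈ T', w y = 1 := by
    rw [← hw1]
    refine Finset.sum_subset (Finset.filter_subset _ _) ?_
    intro y hy hyn
    exact hzero y hy (by simpa [hT', Finset.mem_filter, hy] using hyn)
  have hsumx : ∑ y ∈ T', w y • y = x := by
    rw [← hx']
    refine Finset.sum_subset (Finset.filter_subset _ _) ?_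
    intro y hy hyn
    rw [hzero y hy (by simpa [hT', Finset.mem_filter, hy] using hyn), zero_smul]
  have hmem := T'.centerMass_mem_convexHull (w := w) (z := id)
    (fun y hy => hw0 y (Finset.filter_subset _ _ hy))
    (by rw [hsum1]; norm_num) (fun y hy => Finset.mem_coe.2 hy)
  rwa [Finset.centerMass, hsum1, inv_one, one_smul, show (∑ y ∈ T', w y • id y) = x
    from by simpa using hsumx] at hmem

lemma single_mem_minkSum {Δ : Fin r → Set (Fin d → ℝ)}
    (h0 : ∀ j, (0 : Fin d → ℝ) ∈ Δ j) {j : Fin r} {x : Fin d → ℝ} (hx : x ∈ Δ j) :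
    x ∈ minkSum Δ := by
  classical
  refine ⟨fun k => if k = j then x else 0, fun k => ?_, ?_⟩
  · by_cases hk : k = j
    · subst hk; simpa using hx
    · simpa [hk] using h0 k
  · rw [Finset.sum_ite_eq' Finset.univ j fun _ => x]
    simp

lemma pair_mem_minkSum {Δ : Fin r → Set (Fin d → ℝ)}
    (h0 : ∀ j, (0 : Fin d → ℝ) ∈ Δ j) {i j : Fin r} (hij : i ≠ j)
    {u x : Fin d → ℝ} (hu : u ∈ Δ i) (hx : x ∈ Δ j) : u + x ∈ minkSum Δ := by
  classical
  refine ⟨fun k => if k = i then u else if k = j then x else 0, fun k => ?_, ?_⟩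
  · by_cases hk : k = i
    · subst hk; simpa using hu
    · by_cases hk' : k = j
      · subst hk'; simpa [hk] using hx
      · simpa [hk, hk'] using h0 k
  · have hfun : (fun k => if k = i then u else if k = j then x else 0) =
        (fun k => if k = i then u else 0) + (fun k => if k = j then x else 0) := by
      funext k
      by_cases hk : k = i
      · subst hk; simp [hij]
      · by_cases hk' : k = j
        · subst hk'; simp [hk, Ne.symm hij]
        · simp [hk, hk']
    rw [hfun]
    rw [show (∑ k, ((fun k => if k = i then u else 0) +
        (fun k => if k = j then x else 0)) k) =
        (∑ k, (if k = i then u else 0)) + (∑ k, (if k = j then x else 0)) from by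
      simp [Finset.sum_add_distrib]]
    rw [Finset.sum_ite_eq' Finset.univ i fun _ => u,
      Finset.sum_ite_eq' Finset.univ j fun _ => x]
    simp

lemma nefDual_subset_dualPoly {Δ : Fin r → Set (Fin d → ℝ)} {i : Fin r}
    {v : Fin d → ℝ} (hv : v ∈ nefDual Δ i) : v ∈ dualPoly (minkSum Δ) := by
  rintro x ⟨f, hf, rfl⟩
  rw [pairR_sum_left]
  have h1 : (-1 : ℝ) = ∑ k : Fin r, -(if i = k then (1 : ℝ) else 0) := by simp
  rw [h1]
  exact Finset.sum_le_sum fun k _ => hv k (f k) (hf k)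

lemma convex_nefDual (Δ : Fin r → Set (Fin d → ℝ)) (i : Fin r) :
    Convex ℝ (nefDual Δ i) := by
  have hset : nefDual Δ i = ⋂ j, ⋂ x ∈ Δ j,
      {y | -(if i = j then (1 : ℝ) else 0) ≤ pL x y} := by
    ext y; simp [nefDual, pL_apply]
  rw [hset]
  exact convex_iInter fun j => convex_iInter fun x => convex_iInter fun _ =>
    convex_halfSpace_ge ⟨(pL x).map_add, (pL x).map_smul⟩ _

lemma isClosed_dualPoly (P : Set (Fin d → ℝ)) : IsClosed (dualPoly P) := by
  have hset : dualPoly P = ⋂ x ∈ P, (pL x) ⁻¹' Set.Ici (-1) := by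
    ext y; simp [dualPoly, pL_apply]
  rw [hset]
  exact isClosed_biInter fun x _ => isClosed_Ici.preimage (pL x).continuous

/-- Lemma C: a point of the dual polytope pairing to `-1` with some point of `Δ i`
lies in `∇ i`. -/
lemma mem_nefDual_of_eq_neg_one {Δ : Fin r → Set (Fin d → ℝ)}
    (h0 : ∀ j, (0 : Fin d → ℝ) ∈ Δ j) {i : Fin r} {v : Fin d → ℝ}
    (hv : v ∈ dualPoly (minkSum Δ)) (hge : ∀ u ∈ Δ i, -1 ≤ pairR u v)
    {u₀ : Fin d → ℝ} (hu₀ : u₀ ∈ Δ i) (hp : pairR u₀ v = -1) :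
    v ∈ nefDual Δ i := by
  intro j x hx
  by_cases hj : i = j
  · subst hj; simpa using hge x hx
  · simp only [if_neg hj, neg_zero]
    have hmem : u₀ + x ∈ minkSum Δ := pair_mem_minkSum h0 hj hu₀ hx
    have h1 := hv _ hmem
    rw [pairR_add_left, hp] at h1
    linarith

/-- Scaling lemma: at a point of `∇ i` where a functional attains a positive
maximum over `∇ i`, the inner product with some point of `Δ i` equals `-1`. -/
lemma exists_pair_eq_neg_one {Δ : Fin r → Set (Fin d → ℝ)} {i : Fin r}
    (hpoly : IsLatticePoly (Δ i)) {v : Fin d → ℝ} (hvN : v ∈ nefDual Δ i)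
    {l : (Fin d → ℝ) →L[ℝ] ℝ} {c : ℝ} (hc : 0 < c) (hlv : l v = c)
    (hmax : ∀ y ∈ nefDual Δ i, l y ≤ c) :
    ∃ u ∈ Δ i, pairR u v = -1 := by
  by_contra hno
  push_neg at hno
  obtain ⟨V, hVne, -, hVeq⟩ := hpoly
  have hgt : ∀ u ∈ Δ i, -1 < pairR u v := by
    intro u hu
    have h1 := hvN i u hu
    simp only [if_pos rfl] at h1
    exact lt_of_le_of_ne h1 (Ne.symm (hno u hu))
  have hVsub : ∀ w ∈ V, w ∈ Δ i := by
    intro w hw; rw [hVeq]; exact subset_convexHull ℝ _ hw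
  set m := V.inf' hVne (fun u => pairR u v) with hm
  have hmgt : -1 < m := (Finset.lt_inf'_iff hVne).2 fun u hu => hgt u (hVsub u hu)
  have hmle : ∀ u ∈ Δ i, m ≤ pairR u v := by
    rw [hVeq]
    exact hull_pair_ge fun w hw => Finset.inf'_le _ hw
  obtain ⟨L, hL1, hLm⟩ : ∃ L : ℝ, 1 < L ∧ -1 ≤ L * m := by
    rcases le_or_gt 0 m with h | h
    · exact ⟨2, one_lt_two, by nlinarith⟩
    · have ht : 1 < -1 / m := by rw [lt_div_iff_of_neg h]; linarith
      refine ⟨(1 + -1 / m) / 2, by linarith, ?_⟩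
      have h2 : (1 + -1 / m) / 2 ≤ -1 / m := by linarith
      have h3 : -1 / m * m = -1 := div_mul_cancel₀ (-1) h.ne
      have h4 := mul_le_mul_of_nonpos_right h2 h.le
      linarith
  have hLpos : 0 < L := lt_trans one_pos hL1
  have hsm : L • v ∈ nefDual Δ i := by
    intro j x hx
    rw [pairR_smul_right]
    by_cases hj : i = j
    · subst hj
      rw [if_pos rfl]
      have h1 := hmle x hx
      rcases le_or_gt 0 m with h | h
      · nlinarith
      · nlinarith
    · simp only [if_neg hj, neg_zero]
      have h1 := hvN j x hx
      simp only [if_neg hj, neg_zero] at h1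
      positivity
  have h2 := hmax _ hsm
  rw [map_smul, smul_eq_mul, hlv] at h2
  nlinarith

end NefAux

open NefAux

/-- For dual centered nef-partitions: (a) `∇_i ∩ ∂Δ*` consists of the
points `v ∈ Δ*` with `min_{u ∈ Δ_i} ⟨u,v⟩ = -1`; (b) every face `F` of `∇_i` with
`0 ∉ F` is a face of `Δ*` and is contained in a face of `∇`. -/
theorem nef_partition_face_structure {d r : ℕ}
    (Δ Nb : Fin r → Set (Fin d → ℝ))
    (h : AreDualNefPartitions Δ Nb) :
    ∀ i : Fin r,
      (Nb i ∩ frontier (dualPoly (minkSum Δ)) =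
        {v ∈ dualPoly (minkSum Δ) |
          (∀ u ∈ Δ i, -1 ≤ pairR u v) ∧ ∃ u ∈ Δ i, pairR u v = -1}) ∧
      (∀ F : Set (Fin d → ℝ), IsExposed ℝ (Nb i) F → (0 : Fin d → ℝ) ∉ F →
        IsExposed ℝ (dualPoly (minkSum Δ)) F ∧
        ∃ G, IsExposed ℝ (minkSum Nb) G ∧ F ⊆ G) := by
  classical
  intro i
  obtain ⟨hΔnef, hNbnef, hNbeq, hΔeq⟩ := h
  have h0Δ : ∀ j, (0 : Fin d → ℝ) ∈ Δ j := fun j => (hΔnef.1 j).2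
  have h0Nb : ∀ j, (0 : Fin d → ℝ) ∈ Nb j := fun j => (hNbnef.1 j).2
  have hΔpoly : ∀ j, IsLatticePoly (Δ j) := fun j => (hΔnef.1 j).1
  have hNbpoly : ∀ j, IsLatticePoly (Nb j) := fun j => (hNbnef.1 j).1
  obtain ⟨WΔ, hWΔne, -, hWΔeq⟩ := hΔnef.2.1.1
  obtain ⟨WD, hWDne, -, hWDeq⟩ := hΔnef.2.1.2.2
  have hDclosed := isClosed_dualPoly (minkSum Δ)
  have hΔsub : ∀ j, Δ j ⊆ minkSum Δ := fun j x hx => single_mem_minkSum h0Δ hx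
  have hNbD : ∀ j, Nb j ⊆ dualPoly (minkSum Δ) := fun j v hv =>
    nefDual_subset_dualPoly ((hNbeq j) ▸ hv)
  -- interior criterion
  have hint : ∀ v ∈ nefDual Δ i, (∀ u ∈ Δ i, -1 < pairR u v) →
      v ∈ interior (dualPoly (minkSum Δ)) := by
    intro v hv hstrict
    have hU : ∀ w ∈ WΔ, -1 < pairR w v := by
      intro w hw
      have hwm : w ∈ minkSum Δ := hWΔeq ▸ subset_convexHull ℝ _ hw
      obtain ⟨f, hf, hfe⟩ := hwm
      rw [hfe, pairR_sum_left]
      have hlt : ∑ k, (if k = i then (-1 : ℝ) else 0) < ∑ k, pairR (f k) v := by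
        apply Finset.sum_lt_sum
        · intro k _
          by_cases hk : k = i
          · subst hk
            simpa using (hstrict _ (hf k)).le
          · have h1 := hv k (f k) (hf k)
            have hik : i ≠ k := fun e => hk e.symm
            rw [if_neg hik, neg_zero] at h1
            simpa [hk] using h1
        · exact ⟨i, Finset.mem_univ i, by simpa using hstrict _ (hf i)⟩
      have heq : ∑ k, (if k = i then (-1 : ℝ) else 0) = -1 := by
        rw [Finset.sum_ite_eq' Finset.univ i fun _ => (-1 : ℝ)]; simp
      linarith
    set U := ⋂ w ∈ WΔ, (pL w) ⁻¹' Set.Ioi (-1 : ℝ) with hUdef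
    have hUopen : IsOpen U :=
      isOpen_biInter_finset fun w _ => isOpen_Ioi.preimage (pL w).continuous
    have hUsub : U ⊆ dualPoly (minkSum Δ) := by
      intro y hy x hx
      rw [hWΔeq] at hx
      refine hull_pair_ge (fun w hw => ?_) x hx
      have h1 : y ∈ (pL w) ⁻¹' Set.Ioi (-1 : ℝ) := Set.mem_iInter₂.1 hy w hw
      exact le_of_lt (by simpa using h1)
    have hvU : v ∈ U := Set.mem_iInter₂.2 fun w hw => by
      simpa using hU w hw
    exact interior_maximal hUsub hUopen hvU
  -- non-interior criterion
  have hnotint : ∀ (v u₀ : Fin d → ℝ), u₀ ∈ minkSum Δ → pairR u₀ v = -1 →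
      v ∉ interior (dualPoly (minkSum Δ)) := by
    intro v u₀ hu₀ hp hvint
    obtain ⟨ε, hε, hball⟩ := Metric.mem_nhds_iff.1 (mem_interior_iff_mem_nhds.1 hvint)
    have hu0ne : u₀ ≠ 0 := by
      rintro rfl; rw [pairR_zero_left] at hp; norm_num at hp
    obtain ⟨k, hk⟩ := Function.ne_iff.1 hu0ne
    have hq : 0 < pairR u₀ u₀ :=
      Finset.sum_pos' (fun k _ => mul_self_nonneg _)
        ⟨k, Finset.mem_univ k, mul_self_pos.2 (by simpa using hk)⟩
    have hnorm : 0 < ‖u₀‖ + 1 := by positivity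
    set t := ε / (‖u₀‖ + 1) with htdef
    have ht : 0 < t := div_pos hε hnorm
    have hmem : v - t • u₀ ∈ Metric.ball v ε := by
      rw [Metric.mem_ball, dist_eq_norm]
      rw [show v - t • u₀ - v = -(t • u₀) from by abel]
      rw [norm_neg, norm_smul, Real.norm_eq_abs, abs_of_pos ht]
      calc t * ‖u₀‖ < t * (‖u₀‖ + 1) := by nlinarith [norm_nonneg u₀]
        _ = ε := div_mul_cancel₀ ε hnorm.ne'
    have hd : v - t • u₀ ∈ dualPoly (minkSum Δ) := hball hmem
    have h1 := hd u₀ hu₀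
    rw [pairR_sub_right, pairR_smul_right, hp] at h1
    nlinarith
  constructor
  · -- part (a)
    ext v
    simp only [Set.mem_inter_iff, Set.mem_setOf_eq]
    constructor
    · rintro ⟨hvNb, hvfr⟩
      rw [hDclosed.frontier_eq] at hvfr
      obtain ⟨hvD, hvni⟩ := hvfr
      have hge : ∀ u ∈ Δ i, -1 ≤ pairR u v := fun u hu => hvD u (hΔsub i hu)
      refine ⟨hvD, hge, ?_⟩
      by_contra hno
      push_neg at hno
      have hstrict : ∀ u ∈ Δ i, -1 < pairR u v := fun u hu =>
        lt_of_le_of_ne (hge u hu) (Ne.symm (hno u hu))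
      exact hvni (hint v ((hNbeq i) ▸ hvNb) hstrict)
    · rintro ⟨hvD, hge, u₀, hu₀, hp⟩
      have hvN : v ∈ nefDual Δ i := mem_nefDual_of_eq_neg_one h0Δ hvD hge hu₀ hp
      refine ⟨(hNbeq i).symm ▸ hvN, ?_⟩
      rw [hDclosed.frontier_eq]
      exact ⟨hvD, hnotint v u₀ (hΔsub i hu₀) hp⟩
  · -- part (b)
    intro F hFexp hF0
    rcases F.eq_empty_or_nonempty with rfl | hFne
    · refine ⟨fun hc => absurd hc (by simp), ∅, fun hc => absurd hc (by simp), subset_rfl⟩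
    · obtain ⟨l, hl⟩ := hFexp hFne
      obtain ⟨x₀, hx₀F⟩ := hFne
      have hx₀ := hx₀F
      rw [hl] at hx₀
      obtain ⟨hx₀N, hx₀max⟩ := hx₀
      set c := l x₀ with hcdef
      have hmaxN : ∀ y ∈ Nb i, l y ≤ c := hx₀max
      have hFc : F = {x ∈ Nb i | l x = c} := by
        rw [hl]; ext x
        constructor
        · rintro ⟨hxN, hxmax⟩
          exact ⟨hxN, le_antisymm (hmaxN x hxN) (hxmax x₀ hx₀N)⟩
        · rintro ⟨hxN, hxc⟩
          refine ⟨hxN, fun y hy => ?_⟩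
          rw [hxc]
          exact hmaxN y hy
      have hc0 : 0 < c := by
        have h0' : (0 : ℝ) ≤ c := by simpa using hmaxN 0 (h0Nb i)
        rcases h0'.lt_or_eq with hlt | heq
        · exact hlt
        · exfalso
          apply hF0
          rw [hFc]
          exact ⟨h0Nb i, by simpa using heq⟩
      have hmaxN' : ∀ y ∈ nefDual Δ i, l y ≤ c := fun y hy =>
        hmaxN y ((hNbeq i).symm ▸ hy)
      have hFsub : F ⊆ Nb i := by
        rw [hFc]; exact fun x hx => hx.1
      have hscal : ∀ v ∈ F, ∃ u ∈ Δ i, pairR u v = -1 := by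
        intro v hv
        have hvN : v ∈ nefDual Δ i := (hNbeq i) ▸ hFsub hv
        have hlv : l v = c := by
          rw [hFc] at hv; exact hv.2
        exact exists_pair_eq_neg_one (hΔpoly i) hvN hc0 hlv hmaxN'
      have hFconv : Convex ℝ F := by
        rw [hFc, hNbeq i]
        exact (convex_nefDual Δ i).inter (convex_hyperplane ⟨l.map_add, l.map_smul⟩ c)
      obtain ⟨V', hV'ne, -, hV'eq⟩ := hNbpoly i
      set S := V'.filter (fun w => l w = c) with hSdef
      have hSsubF : ∀ w ∈ S, w ∈ F := by
        intro w hw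
        rw [hFc]
        obtain ⟨hw1, hw2⟩ := Finset.mem_filter.1 hw
        exact ⟨hV'eq ▸ subset_convexHull ℝ _ hw1, hw2⟩
      have hV'le : ∀ w ∈ V', l w ≤ c := fun w hw =>
        hmaxN w (hV'eq ▸ subset_convexHull ℝ _ hw)
      have hSne : S.Nonempty := by
        obtain ⟨b, hb, hbe⟩ := V'.exists_mem_eq_sup' hV'ne l
        refine ⟨b, Finset.mem_filter.2 ⟨hb, le_antisymm (hV'le b hb) ?_⟩⟩
        have h1 : l x₀ ≤ V'.sup' hV'ne l :=
          hull_clm_le (fun w hw => Finset.le_sup' l hw) x₀ (hV'eq ▸ hx₀N)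
        rw [hbe] at h1
        exact h1
      have hFhullS : F ⊆ convexHull ℝ (S : Set (Fin d → ℝ)) := by
        intro x hx
        have hxN : x ∈ convexHull ℝ (V' : Set (Fin d → ℝ)) := hV'eq ▸ hFsub hx
        refine mem_filter_hull l hV'le hxN ?_
        rw [hFc] at hx; exact hx.2
      have hNpos : (0 : ℝ) < (S.card : ℝ) := by exact_mod_cast Finset.card_pos.2 hSne
      set vc := S.centerMass (fun _ => (1 : ℝ)) id with hvcdef
      have hvcS : vc ∈ convexHull ℝ (S : Set (Fin d → ℝ)) :=
        S.centerMass_mem_convexHull (fun _ _ => zero_le_one)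
          (by simpa using hNpos) (fun y hy => Finset.mem_coe.2 hy)
      have hvcF : vc ∈ F := convexHull_min hSsubF hFconv hvcS
      obtain ⟨u₀, hu₀, hpvc⟩ := hscal vc hvcF
      have hgeS : ∀ w ∈ S, -1 ≤ pairR u₀ w := by
        intro w hw
        have hwN : w ∈ nefDual Δ i := (hNbeq i) ▸ hFsub (hSsubF w hw)
        simpa using hwN i u₀ hu₀
      have hvc_eq : vc = ((S.card : ℝ))⁻¹ • ∑ w ∈ S, w := by
        rw [hvcdef, Finset.centerMass]; simp
      have hsumS : ∑ w ∈ S, (-1 : ℝ) = ∑ w ∈ S, pairR u₀ w := by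
        have h1 : pairR u₀ vc = ((S.card : ℝ))⁻¹ * ∑ w ∈ S, pairR u₀ w := by
          rw [hvc_eq, pairR_smul_right, pairR_sum_right]
        rw [hpvc] at h1
        have h2 : ∑ w ∈ S, pairR u₀ w = -(S.card : ℝ) := by
          field_simp at h1
          linarith
        rw [h2, Finset.sum_const]
        simp
      have hSeq : ∀ w ∈ S, pairR u₀ w = -1 := fun w hw =>
        ((Finset.sum_eq_sum_iff_of_le hgeS).1 hsumS w hw).symm
      have huni : ∀ v ∈ F, pairR u₀ v = -1 := fun v hv =>
        hull_pair_eq hSeq v (hFhullS hv)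
      have hu₀mink : u₀ ∈ minkSum Δ := hΔsub i hu₀
      -- choose μ
      obtain ⟨μ, hμpos, hμ⟩ : ∃ μ : ℝ, 0 < μ ∧ ∀ w ∈ WD, -pairR u₀ w < 1 →
          -pairR u₀ w + μ * l w < 1 + μ * c := by
        set W₂ := WD.filter (fun w => -pairR u₀ w < 1 ∧ c < l w) with hW₂def
        rcases W₂.eq_empty_or_nonempty with hE | hne
        · refine ⟨1, one_pos, fun w hw hlt => ?_⟩
          have hlc : ¬ c < l w := fun hcl =>
            (Finset.eq_empty_iff_forall_notMem.1 hE w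
              (Finset.mem_filter.2 ⟨hw, hlt, hcl⟩))
          push_neg at hlc
          nlinarith
        · set μ0 := W₂.inf' hne (fun w => (1 + pairR u₀ w) / (l w - c)) with hμ0def
          have hμ0pos : 0 < μ0 := by
            apply (Finset.lt_inf'_iff hne).2
            intro w hw
            obtain ⟨-, h1, h2⟩ := Finset.mem_filter.1 hw
            exact div_pos (by linarith) (by linarith)
          refine ⟨μ0 / 2, by positivity, ?_⟩
          intro w hw hlt
          rcases le_or_gt (l w) c with hlc | hlc
          · nlinarith
          · have hwW₂ : w ∈ W₂ := Finset.mem_filter.2 ⟨hw, hlt, hlc⟩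
            have h1 : μ0 ≤ (1 + pairR u₀ w) / (l w - c) := Finset.inf'_le _ hwW₂
            have h2 : μ0 / 2 < (1 + pairR u₀ w) / (l w - c) := by linarith
            have h3 : μ0 / 2 * (l w - c) < 1 + pairR u₀ w :=
              (lt_div_iff₀ (by linarith)).1 h2
            nlinarith
      set φ : (Fin d → ℝ) →L[ℝ] ℝ := μ • l - pL u₀ with hφdef
      have hφapp : ∀ x, φ x = -pairR u₀ x + μ * l x := by
        intro x
        simp [hφdef]
        ring
      have hboundW : ∀ w ∈ WD, φ w ≤ 1 + μ * c := by
        intro w hw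
        have hwD : w ∈ dualPoly (minkSum Δ) := hWDeq ▸ subset_convexHull ℝ _ hw
        have h1 : -1 ≤ pairR u₀ w := hwD u₀ hu₀mink
        rw [hφapp]
        rcases eq_or_lt_of_le h1 with heq | hlt
        · have hwN : w ∈ nefDual Δ i :=
            mem_nefDual_of_eq_neg_one h0Δ hwD (fun u hu => hwD u (hΔsub i hu))
              hu₀ heq.symm
          have h2 := hmaxN' w hwN
          nlinarith
        · exact le_of_lt (hμ w hw (by linarith))
      have hboundD : ∀ y ∈ dualPoly (minkSum Δ), φ y ≤ 1 + μ * c := by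
        intro y hy
        exact hull_clm_le hboundW y (hWDeq ▸ hy)
      have hφF : ∀ x ∈ F, φ x = 1 + μ * c := by
        intro x hx
        rw [hφapp, huni x hx]
        have : l x = c := by rw [hFc] at hx; exact hx.2
        rw [this]; ring
      constructor
      · -- F exposed in the dual polytope
        intro _
        refine ⟨φ, ?_⟩
        ext x
        constructor
        · intro hxF
          have hxD : x ∈ dualPoly (minkSum Δ) := hNbD i (hFsub hxF)
          refine ⟨hxD, fun y hy => ?_⟩
          rw [hφF x hxF]
          exact hboundD y hy
        · rintro ⟨hxD, hxmax⟩
          have hx₀D : x₀ ∈ dualPoly (minkSum Δ) := hNbD i (hFsub hx₀F)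
          have h3 : φ x = 1 + μ * c :=
            le_antisymm (hboundD x hxD) ((hφF x₀ hx₀F) ▸ hxmax x₀ hx₀D)
          have hxW : x ∈ convexHull ℝ (WD : Set (Fin d → ℝ)) := hWDeq ▸ hxD
          have hxhull := mem_filter_hull φ hboundW hxW h3
          refine convexHull_min (fun w hw => ?_) hFconv hxhull
          obtain ⟨hwW, hwφ⟩ := Finset.mem_filter.1 hw
          have hwD : w ∈ dualPoly (minkSum Δ) := hWDeq ▸ subset_convexHull ℝ _ hwW
          have h1 : -1 ≤ pairR u₀ w := hwD u₀ hu₀mink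
          have hcase : ¬ (-pairR u₀ w < 1) := by
            intro hlt
            have h2 := hμ w hwW hlt
            rw [hφapp] at hwφ
            linarith
          have hpw : pairR u₀ w = -1 := by
            push_neg at hcase
            linarith
          have hlw : l w = c := by
            rw [hφapp, hpw] at hwφ
            have h4 : μ * l w = μ * c := by linarith
            exact mul_left_cancel₀ (ne_of_gt hμpos) h4
          have hwN : w ∈ nefDual Δ i :=
            mem_nefDual_of_eq_neg_one h0Δ hwD (fun u hu => hwD u (hΔsub i hu))
              hu₀ hpw
          rw [hFc]
          exact ⟨(hNbeq i).symm ▸ hwN, hlw⟩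
      · -- F contained in an exposed face of ∇
        refine ⟨{x ∈ minkSum Nb | ∀ y ∈ minkSum Nb, (-(pL u₀)) y ≤ (-(pL u₀)) x},
          fun _ => ⟨-(pL u₀), rfl⟩, ?_⟩
        intro v hv
        have hvNb : v ∈ Nb i := hFsub hv
        have hvmink : v ∈ minkSum Nb := single_mem_minkSum h0Nb hvNb
        refine ⟨hvmink, ?_⟩
        rintro y ⟨g, hg, rfl⟩
        have hu₀N : u₀ ∈ nefDual Nb i := (hΔeq i) ▸ hu₀
        simp only [ContinuousLinearMap.neg_apply, pL_apply, neg_le_neg_iff]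
        rw [huni v hv, pairR_sum_right]
        have h1 : (-1 : ℝ) = ∑ j : Fin r, -(if i = j then (1 : ℝ) else 0) := by simp
        rw [h1]
        refine Finset.sum_le_sum fun j _ => ?_
        rw [pairR_comm]
        exact hu₀N j (g j) (hg j)
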